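/- Let c be a circle and c₁, c₂ two circles both orthogonal to c. Then any intersection point of c₁ and c₂ lying strictly inside c is mapped by inversion in c to an intersection point of c₁ and c₂ lying strictly outside c; consequently c₁ and c₂ have at most one intersection point strictly inside c. -/

import Mathlib

/-!
Inversion in `c` maps every circle orthogonal to `c` into itself: orthogonality says that the
power of the center `m` with respect to such a circle is `r ^ 2`, which is the product of the
distances from `m` to a point `p` and to its image. Inversion also sends the inside of `c` to the
outside. So a common point `p` of `c₁` and `c₂` inside `c` has an image `p'` on both circles outside
`c`, and a second common point `q` inside `c` would make `p`, `q`, `p'` three common points of two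
distinct circles.
-/

noncomputable def circleInversion (m : EuclideanSpace ℝ (Fin 2)) (r : ℝ)
    (p : EuclideanSpace ℝ (Fin 2)) : EuclideanSpace ℝ (Fin 2) :=
  m + (r ^ 2 / dist p m ^ 2) • (p - m)

open scoped RealInnerProductSpace

namespace EuclideanGeometry

variable {V P : Type*} [NormedAddCommGroup V] [InnerProductSpace ℝ V] [MetricSpace P]
  [NormedAddTorsor V P]

def Sphere.IsOrthogonal (s t : Sphere P) : Prop :=
  s.radius ^ 2 + t.radius ^ 2 = dist s.center t.center ^ 2

theorem Sphere.IsOrthogonal.center_notMem {s t : Sphere P} (h : s.IsOrthogonal t)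
    (hs : s.radius ≠ 0) : s.center ∉ t := by
  intro hc
  rw [Sphere.IsOrthogonal, mem_sphere.1 hc] at h
  exact hs (pow_eq_zero_iff two_ne_zero |>.1 (by linarith))

theorem Sphere.IsOrthogonal.inversion_mem {s t : Sphere P} (h : s.IsOrthogonal t) {x : P}
    (hx : x ∈ t) (hxc : x ≠ s.center) : inversion s.center s.radius x ∈ t := by
  obtain ⟨c, R⟩ := s
  obtain ⟨c', R'⟩ := t
  simp only [Sphere.IsOrthogonal, mem_sphere] at h hx hxc ⊢
  suffices dist (inversion c R x) c' ^ 2 = R' ^ 2 from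
    (pow_left_inj₀ dist_nonneg (hx ▸ dist_nonneg) two_ne_zero).1 this
  rw [dist_eq_norm_vsub V, ← vsub_add_vsub_cancel _ c, inversion_vsub_center, norm_add_sq_real,
    norm_smul, real_inner_smul_left, ← dist_eq_norm_vsub V, ← dist_eq_norm_vsub V, ← h,
    Real.norm_eq_abs, mul_pow, sq_abs]
  have hk : (R / dist x c) ^ 2 * dist x c ^ 2 = R ^ 2 := by
    rw [div_pow]
    exact div_mul_cancel₀ _ (pow_ne_zero 2 (dist_ne_zero.2 hxc))
  -- `x ∈ t`, with `dist c c' ^ 2` replaced by `R ^ 2 + R' ^ 2`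
  have hx' : dist x c ^ 2 + 2 * ⟪x -ᵥ c, c -ᵥ c'⟫ + R ^ 2 = 0 := by
    have := norm_add_sq_real (x -ᵥ c) (c -ᵥ c')
    rw [vsub_add_vsub_cancel, ← dist_eq_norm_vsub V, ← dist_eq_norm_vsub V,
      ← dist_eq_norm_vsub V, hx, ← h] at this
    linarith
  set k := (R / dist x c) ^ 2
  linear_combination k * hx' + (k - 1) * hk

theorem radius_lt_dist_inversion_center {c x : P} {R : ℝ} (hxc : x ≠ c) (hx : dist x c < R) :
    R < dist (inversion c R x) c := by
  have hd : 0 < dist x c := dist_pos.2 hxc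
  rw [dist_inversion_center, lt_div_iff₀ hd]
  nlinarith

end EuclideanGeometry

open EuclideanGeometry

theorem circleInversion_eq_inversion (m : EuclideanSpace ℝ (Fin 2)) (r : ℝ) :
    circleInversion m r = inversion m r := by
  ext1 p
  rw [circleInversion, inversion, div_pow, vsub_eq_sub, vadd_eq_add, add_comm]

theorem orthogonal_circles_at_most_one_intersection_inside_general
    (m m₁ m₂ : EuclideanSpace ℝ (Fin 2)) (r r₁ r₂ : ℝ)
    (ho₁ : r ^ 2 + r₁ ^ 2 = dist m m₁ ^ 2) (ho₂ : r ^ 2 + r₂ ^ 2 = dist m m₂ ^ 2)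
    (hne : {p : EuclideanSpace ℝ (Fin 2) | dist p m₁ = r₁} ≠ {p | dist p m₂ = r₂}) :
    (∀ p : EuclideanSpace ℝ (Fin 2), dist p m₁ = r₁ → dist p m₂ = r₂ → dist p m < r →
        dist (circleInversion m r p) m₁ = r₁ ∧ dist (circleInversion m r p) m₂ = r₂ ∧
          r < dist (circleInversion m r p) m) ∧
    {p : EuclideanSpace ℝ (Fin 2) |
      dist p m₁ = r₁ ∧ dist p m₂ = r₂ ∧ dist p m < r}.Subsingleton := by
  have hc₁ : Sphere.IsOrthogonal ⟨m, r⟩ ⟨m₁, r₁⟩ := ho₁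
  have hc₂ : Sphere.IsOrthogonal ⟨m, r⟩ ⟨m₂, r₂⟩ := ho₂
  have inside_to_outside : ∀ p : EuclideanSpace ℝ (Fin 2), dist p m₁ = r₁ → dist p m₂ = r₂ →
      dist p m < r →
      dist (circleInversion m r p) m₁ = r₁ ∧ dist (circleInversion m r p) m₂ = r₂ ∧
        r < dist (circleInversion m r p) m := by
    intro p hp₁ hp₂ hp
    have hpm : p ≠ m := fun h ↦ hc₁.center_notMem (dist_nonneg.trans_lt hp).ne' (h ▸ hp₁)
    rw [circleInversion_eq_inversion]
    exact ⟨hc₁.inversion_mem hp₁ hpm, hc₂.inversion_mem hp₂ hpm,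
      radius_lt_dist_inversion_center hpm hp⟩
  refine ⟨inside_to_outside, ?_⟩
  rintro p ⟨hp₁, hp₂, hp⟩ q ⟨hq₁, hq₂, hq⟩
  by_contra hpq
  obtain ⟨hp'₁, hp'₂, hp'⟩ := inside_to_outside p hp₁ hp₂ hp
  have hc₁₂ : (⟨m₁, r₁⟩ : Sphere (EuclideanSpace ℝ (Fin 2))) ≠ ⟨m₂, r₂⟩ := by
    rintro ⟨⟩; exact hne rfl
  rcases eq_of_mem_sphere_of_mem_sphere_of_finrank_eq_two finrank_euclideanSpace_fin hc₁₂ hpq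
    hp₁ hq₁ hp'₁ hp₂ hq₂ hp'₂ with h | h <;> rw [h] at hp' <;> linarith

/-- If `c₁` and `c₂` are two distinct circles both orthogonal to the circle `c` (center `m`,
radius `r`), then inversion in `c` maps any intersection point of `c₁` and `c₂` lying
strictly inside `c` to an intersection point lying strictly outside `c`; consequently `c₁`
and `c₂` have at most one intersection point strictly inside `c`. -/
theorem orthogonal_circles_at_most_one_intersection_inside
    (m m₁ m₂ : EuclideanSpace ℝ (Fin 2)) (r r₁ r₂ : ℝ)
    (hr : 0 < r) (h₁ : 0 < r₁) (h₂ : 0 < r₂)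
    (ho₁ : r ^ 2 + r₁ ^ 2 = dist m m₁ ^ 2) (ho₂ : r ^ 2 + r₂ ^ 2 = dist m m₂ ^ 2)
    (hne : {p : EuclideanSpace ℝ (Fin 2) | dist p m₁ = r₁} ≠ {p | dist p m₂ = r₂}) :
    (∀ p : EuclideanSpace ℝ (Fin 2), dist p m₁ = r₁ → dist p m₂ = r₂ → dist p m < r →
        dist (circleInversion m r p) m₁ = r₁ ∧ dist (circleInversion m r p) m₂ = r₂ ∧
          r < dist (circleInversion m r p) m) ∧
    {p : EuclideanSpace ℝ (Fin 2) |
      dist p m₁ = r₁ ∧ dist p m₂ = r₂ ∧ dist p m < r}.Subsingleton :=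
  orthogonal_circles_at_most_one_intersection_inside_general m m₁ m₂ r r₁ r₂ ho₁ ho₂ hne
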